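/- arXiv:2502.08502 — 5 statements merged into one kernel-verified Lean document; each statement's English description precedes it below -/
import Mathlib

section
/- For β_1, β_2, β_S ∈ (0,1/2) with β_1 ∈ (0, β_2], and for α ∈ [0, 1/2], let D(α) := H_b(β_S) + H_b(α * β_2) − H_b(α * β_2 * β_S). Then D is a continuous strictly increasing function of α on [0,1/2], with D(0) = H_b(β_2) + H_b(β_S) − H_b(β_2 * β_S) and D(1/2) = H_b(β_S). Hence for every target distortion D ∈ [H_b(β_2)+H_b(β_S)−H_b(β_2*β_S), H_b(β_S)] there is a unique α_D ∈ [0,1/2] with D(α_D) = D. -/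
/-- Binary entropy function (base-2 logarithm). -/
noncomputable def Hb (p : ℝ) : ℝ := -(p * Real.logb 2 p) - (1 - p) * Real.logb 2 (1 - p)

/-- Binary convolution `a * b = a(1−b) + b(1−a)`. -/
def bconv (a b : ℝ) : ℝ := a * (1 - b) + b * (1 - a)

lemma Hb_eq (p : ℝ) : Hb p = (Real.negMulLog p + Real.negMulLog (1 - p)) / Real.log 2 := by
  simp only [Hb, Real.negMulLog, Real.logb]
  ring

lemma Hb_fun_eq : Hb = fun p => (Real.negMulLog p + Real.negMulLog (1 - p)) / Real.log 2 :=
  funext Hb_eq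

lemma Hb_continuous : Continuous Hb := by
  rw [Hb_fun_eq]
  exact (Real.continuous_negMulLog.add
    (Real.continuous_negMulLog.comp (continuous_const.sub continuous_id))).div_const _

lemma Hb_hasDerivAt {p : ℝ} (h0 : 0 < p) (h1 : p < 1) :
    HasDerivAt Hb ((Real.log (1 - p) - Real.log p) / Real.log 2) p := by
  have h1' : (1:ℝ) - p ≠ 0 := by linarith
  have d1 := Real.hasDerivAt_negMulLog (ne_of_gt h0)
  have d2 : HasDerivAt (fun x : ℝ => Real.negMulLog (1 - x))
      ((-Real.log (1 - p) - 1) * (-1)) p :=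
    (Real.hasDerivAt_negMulLog h1').comp p ((hasDerivAt_id p).const_sub 1)
  have h := (d1.add d2).div_const (Real.log 2)
  rw [Hb_fun_eq]
  refine h.congr_deriv ?_
  ring

/-- For `β₁, β₂, β_S ∈ (0,1/2)` with `β₁ ∈ (0, β₂]`, the map
`D(α) = H_b(β_S) + H_b(α*β₂) − H_b(α*β₂*β_S)` is continuous and strictly increasing on
`[0,1/2]`, with `D(0) = H_b(β₂)+H_b(β_S)−H_b(β₂*β_S)` and `D(1/2) = H_b(β_S)`; hence for
every target distortion in `[H_b(β₂)+H_b(β_S)−H_b(β₂*β_S), H_b(β_S)]` there is a unique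
`α_D ∈ [0,1/2]` achieving it. -/
theorem distortion_function_strictly_increasing
    (β₁ β₂ βS : ℝ)
    (hβ₁ : β₁ ∈ Set.Ioo (0:ℝ) (1/2)) (hβ₂ : β₂ ∈ Set.Ioo (0:ℝ) (1/2))
    (hβS : βS ∈ Set.Ioo (0:ℝ) (1/2)) (h12 : β₁ ≤ β₂) :
    ContinuousOn (fun α => Hb βS + Hb (bconv α β₂) - Hb (bconv (bconv α β₂) βS))
      (Set.Icc (0:ℝ) (1/2)) ∧
    StrictMonoOn (fun α => Hb βS + Hb (bconv α β₂) - Hb (bconv (bconv α β₂) βS))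
      (Set.Icc (0:ℝ) (1/2)) ∧
    (Hb βS + Hb (bconv 0 β₂) - Hb (bconv (bconv 0 β₂) βS)
      = Hb β₂ + Hb βS - Hb (bconv β₂ βS)) ∧
    (Hb βS + Hb (bconv (1/2) β₂) - Hb (bconv (bconv (1/2) β₂) βS) = Hb βS) ∧
    ∀ D ∈ Set.Icc (Hb β₂ + Hb βS - Hb (bconv β₂ βS)) (Hb βS),
      ∃! α, α ∈ Set.Icc (0:ℝ) (1/2) ∧
        Hb βS + Hb (bconv α β₂) - Hb (bconv (bconv α β₂) βS) = D := by
  obtain ⟨hb20, hb21⟩ := hβ₂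
  obtain ⟨hbS0, hbS1⟩ := hβS
  set f : ℝ → ℝ := fun α => Hb βS + Hb (bconv α β₂) - Hb (bconv (bconv α β₂) βS) with hf
  have hlog2 : (0:ℝ) < Real.log 2 := Real.log_pos (by norm_num)
  -- continuity
  have hcont : Continuous f := by
    apply Continuous.sub
    · exact continuous_const.add (Hb_continuous.comp (by unfold bconv; fun_prop))
    · exact Hb_continuous.comp (by unfold bconv; fun_prop)
  -- derivative positivity on the interior
  have hmono : StrictMonoOn f (Set.Icc (0:ℝ) (1/2)) := by
    apply strictMonoOn_of_deriv_pos (convex_Icc 0 (1/2)) hcont.continuousOn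
    intro α hα
    rw [interior_Icc] at hα
    obtain ⟨hα0, hα1⟩ := hα
    set l := bconv α β₂ with hl
    set m := bconv l βS with hm
    have hlval : l = (1 - 2*β₂) * α + β₂ := by simp [hl, bconv]; ring
    have hmval : m = (1 - 2*βS) * l + βS := by simp [hm, bconv]; ring
    have hl0 : 0 < l := by rw [hlval]; nlinarith
    have hl1 : l < 1/2 := by rw [hlval]; nlinarith
    have hlm : l < m := by rw [hmval]; nlinarith
    have hm1 : m < 1/2 := by rw [hmval]; nlinarith
    have hm0 : 0 < m := lt_trans hl0 hlm
    have hlin : HasDerivAt (fun x : ℝ => bconv x β₂) (1 - 2*β₂) α := by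
      have : (fun x : ℝ => bconv x β₂) = fun x => (1 - 2*β₂) * x + β₂ := by
        funext x; simp [bconv]; ring
      rw [this]
      simpa using ((hasDerivAt_id α).const_mul (1 - 2*β₂)).add_const β₂
    have hslin : HasDerivAt (fun y : ℝ => bconv y βS) (1 - 2*βS) l := by
      have : (fun y : ℝ => bconv y βS) = fun y => (1 - 2*βS) * y + βS := by
        funext y; simp [bconv]; ring
      rw [this]
      simpa using ((hasDerivAt_id l).const_mul (1 - 2*βS)).add_const βS
    have h2 := (Hb_hasDerivAt hl0 (by linarith)).comp α hlin
    have h3 := (Hb_hasDerivAt hm0 (by linarith)).comp α (hslin.comp α hlin)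
    have hfd : HasDerivAt f
        ((Real.log (1 - l) - Real.log l) / Real.log 2 * (1 - 2*β₂)
          - (Real.log (1 - m) - Real.log m) / Real.log 2 * ((1 - 2*βS) * (1 - 2*β₂))) α :=
      (h2.const_add (Hb βS)).sub h3
    rw [hfd.deriv]
    set A := Real.log (1 - l) - Real.log l with hA
    set B := Real.log (1 - m) - Real.log m with hB
    have hBA : B < A := by
      have h1 : Real.log (1 - m) < Real.log (1 - l) := Real.log_lt_log (by linarith) (by linarith)
      have h2 : Real.log l < Real.log m := Real.log_lt_log hl0 hlm
      simp only [hA, hB]; linarith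
    have hB0 : 0 < B := by
      have : Real.log m < Real.log (1 - m) := Real.log_lt_log hm0 (by linarith)
      simp only [hB]; linarith
    have hkey : 0 < A - (1 - 2*βS) * B := by nlinarith
    have heq : A / Real.log 2 * (1 - 2*β₂) - B / Real.log 2 * ((1 - 2*βS) * (1 - 2*β₂))
        = (1 - 2*β₂) * (A - (1 - 2*βS) * B) / Real.log 2 := by ring
    rw [heq]
    exact div_pos (mul_pos (by linarith) hkey) hlog2
  -- endpoint values
  have hb0 : bconv 0 β₂ = β₂ := by simp [bconv]
  have he0 : f 0 = Hb β₂ + Hb βS - Hb (bconv β₂ βS) := by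
    simp only [hf, hb0]; ring
  have hbh : bconv (1/2) β₂ = 1/2 := by simp [bconv]; ring
  have hbh2 : bconv (1/2) βS = 1/2 := by simp [bconv]; ring
  have he1 : f (1/2) = Hb βS := by
    simp only [hf, hbh, hbh2]; ring
  refine ⟨hcont.continuousOn, hmono, by simpa [hf] using he0, by simpa [hf] using he1, ?_⟩
  intro D hD
  have hsub := intermediate_value_Icc (by norm_num : (0:ℝ) ≤ 1/2) hcont.continuousOn
  have hD' : D ∈ Set.Icc (f 0) (f (1/2)) := by rw [he0, he1]; exact hD
  obtain ⟨α, hαmem, hαval⟩ := hsub hD'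
  exact ⟨α, ⟨hαmem, hαval⟩, fun y ⟨hy, hyval⟩ =>
    hmono.injOn hy hαmem (by simp only [hf] at hαval ⊢; rw [hyval, hαval])⟩
end

section
/- Let λ ≥ 0 and let β_1, β_2, β_S ∈ (0,1/2). Suppose U, X are random variables on finite alphabets with joint distribution p_{UX}, and define Y_1 = X ⊕ Z_1, Y_2 = X ⊕ Z_2 ⊕ S where Z_1 ~ Bernoulli(β_1), Z_2 ~ Bernoulli(β_2), S ~ Bernoulli(β_S) are mutually independent and independent of (U,X). Then I(X;Y_1|U) + I(U;Y_2) − λ H(S|U,Y_2) ≤ 1 − H_b(β_1) − λ H_b(β_S) + max_{α∈[0,1/2]} ( H_b(α*β_1) − (1−λ) H_b(α*β_2*β_S) − λ H_b(α*β_2) ). -/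
/-- Bernoulli pmf on `Bool`. -/
noncomputable def bern (β : ℝ) : Bool → ℝ := fun b => if b then β else 1 - β

/-- Shannon entropy (base 2) of a pmf on a finite type. -/
noncomputable def Hent {γ : Type*} [Fintype γ] (f : γ → ℝ) : ℝ :=
  ∑ x, -(f x * Real.logb 2 (f x))

noncomputable def phi (t : ℝ) : ℝ := -(t * Real.logb 2 t)

lemma Hent_eq {γ : Type*} [Fintype γ] (f : γ → ℝ) : Hent f = ∑ x, phi (f x) := rfl

lemma Hb_phi (p : ℝ) : Hb p = phi p + phi (1 - p) := by unfold Hb phi; ring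

lemma phi_mul {a b : ℝ} (ha : 0 ≤ a) (hb : 0 ≤ b) :
    phi (a * b) = a * phi b + b * phi a := by
  rcases ha.eq_or_lt with h | h
  · simp [phi, ← h]
  rcases hb.eq_or_lt with h2 | h2
  · simp [phi, ← h2]
  · unfold phi
    rw [Real.logb, Real.logb, Real.logb, Real.log_mul (ne_of_gt h) (ne_of_gt h2)]
    ring

lemma phi_pair {s m : ℝ} (hs : 0 ≤ s) (hm0 : 0 ≤ m) (hm1 : m ≤ 1) :
    phi (s * m) + phi (s * (1 - m)) = s * Hb m + phi s := by
  rw [phi_mul hs hm0, phi_mul hs (by linarith), Hb_phi]; ring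

lemma bconv_mem {a b : ℝ} (ha : a ∈ Set.Icc (0:ℝ) 1) (hb : b ∈ Set.Icc (0:ℝ) 1) :
    bconv a b ∈ Set.Icc (0:ℝ) 1 := by
  obtain ⟨ha0, ha1⟩ := ha; obtain ⟨hb0, hb1⟩ := hb
  unfold bconv; constructor <;> nlinarith

lemma Hb_eq_binEntropy (p : ℝ) : Hb p = Real.binEntropy p / Real.log 2 := by
  rw [Real.binEntropy, Real.log_inv, Real.log_inv]; unfold Hb Real.logb; ring

lemma Hb_nonneg {p : ℝ} (h0 : 0 ≤ p) (h1 : p ≤ 1) : 0 ≤ Hb p := by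
  rw [Hb_eq_binEntropy]
  exact div_nonneg (Real.binEntropy_nonneg h0 h1) (Real.log_nonneg one_le_two)

lemma Hb_le_one (p : ℝ) : Hb p ≤ 1 := by
  rw [Hb_eq_binEntropy, div_le_one (Real.log_pos one_lt_two)]
  exact Real.binEntropy_le_log_two

lemma Hb_one_sub (p : ℝ) : Hb (1 - p) = Hb p := by
  rw [Hb_eq_binEntropy, Hb_eq_binEntropy, Real.binEntropy_one_sub]

lemma bconv_one_sub_left (a b : ℝ) : bconv (1 - a) b = 1 - bconv a b := by unfold bconv; ring

lemma bconv_assoc (a b c : ℝ) : bconv a (bconv b c) = bconv (bconv a b) c := by unfold bconv; ring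

lemma two_phi {s t β : ℝ} (hs : 0 ≤ s) (ht0 : 0 ≤ t) (ht1 : t ≤ 1)
    (hβ0 : 0 ≤ β) (hβ1 : β ≤ 1) :
    phi (s * t * (1 - β) + s * (1 - t) * β) + phi (s * t * β + s * (1 - t) * (1 - β))
      = s * Hb (bconv t β) + phi s := by
  have hm := bconv_mem (a := t) (b := β) ⟨ht0, ht1⟩ ⟨hβ0, hβ1⟩
  have h1 : s * t * (1 - β) + s * (1 - t) * β = s * bconv t β := by unfold bconv; ring
  have h2 : s * t * β + s * (1 - t) * (1 - β) = s * (1 - bconv t β) := by unfold bconv; ring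
  rw [h1, h2]
  exact phi_pair hs hm.1 hm.2

lemma four_phi {s t β γ : ℝ} (hs : 0 ≤ s) (ht0 : 0 ≤ t) (ht1 : t ≤ 1)
    (hβ0 : 0 ≤ β) (hβ1 : β ≤ 1) (hγ0 : 0 ≤ γ) (hγ1 : γ ≤ 1) :
    phi (s * γ * t * (1 - β) + s * γ * (1 - t) * β)
      + phi (s * γ * t * β + s * γ * (1 - t) * (1 - β))
      + phi (s * (1 - γ) * t * (1 - β) + s * (1 - γ) * (1 - t) * β)
      + phi (s * (1 - γ) * t * β + s * (1 - γ) * (1 - t) * (1 - β))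
      = s * Hb (bconv t β) + s * Hb γ + phi s := by
  have h1 := two_phi (s := s * γ) (t := t) (β := β) (mul_nonneg hs hγ0) ht0 ht1 hβ0 hβ1
  have h2 := two_phi (s := s * (1 - γ)) (t := t) (β := β)
    (mul_nonneg hs (by linarith)) ht0 ht1 hβ0 hβ1
  have h3 := phi_pair (s := s) (m := γ) hs hγ0 hγ1
  linear_combination h1 + h2 + h3


/-- extremal inequality for the binary ISAC channel.  With
`Y₁ = X ⊕ Z₁`, `Y₂ = X ⊕ Z₂ ⊕ S` (`Z₁ ~ Bern(β₁)`, `Z₂ ~ Bern(β₂)`, `S ~ Bern(β_S)`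
mutually independent and independent of `(U,X)`, joint pmf `p` of `(U,X)`):
`I(X;Y₁|U) + I(U;Y₂) − λ H(S|U,Y₂)
  ≤ 1 − H_b(β₁) − λ H_b(β_S)
    + max_{α∈[0,1/2]} (H_b(α*β₁) − (1−λ)H_b(α*β₂*β_S) − λH_b(α*β₂))`. -/
theorem binary_extremal_inequality
    {𝒰 : Type*} [Fintype 𝒰] [Nonempty 𝒰]
    (lam β₁ β₂ βS : ℝ) (hlam : 0 ≤ lam)
    (hβ₁ : β₁ ∈ Set.Ioo (0:ℝ) (1/2)) (hβ₂ : β₂ ∈ Set.Ioo (0:ℝ) (1/2))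
    (hβS : βS ∈ Set.Ioo (0:ℝ) (1/2))
    (p : 𝒰 × Bool → ℝ) (hp0 : ∀ w, 0 ≤ p w) (hp1 : ∑ w, p w = 1) :
    -- I(X;Y₁|U) = (H(U,Y₁) − H(U)) − (H(U,X,Y₁) − H(U,X))
    ((Hent (fun uy : 𝒰 × Bool => ∑ x, p (uy.1, x) * bern β₁ (xor x uy.2))
        - Hent (fun u : 𝒰 => ∑ x, p (u, x)))
      - (Hent (fun w : 𝒰 × Bool × Bool => p (w.1, w.2.1) * bern β₁ (xor w.2.1 w.2.2))
        - Hent p))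
    -- I(U;Y₂) = H(U) + H(Y₂) − H(U,Y₂)
    + (Hent (fun u : 𝒰 => ∑ x, p (u, x))
      + Hent (fun y : Bool => ∑ u, ∑ x, p (u, x) * bern (bconv β₂ βS) (xor x y))
      - Hent (fun uy : 𝒰 × Bool => ∑ x, p (uy.1, x) * bern (bconv β₂ βS) (xor x uy.2)))
    -- H(S|U,Y₂) = H(U,Y₂,S) − H(U,Y₂)
    - lam * (Hent (fun w : 𝒰 × Bool × Bool =>
          ∑ x, p (w.1, x) * bern βS w.2.2 * bern β₂ (xor x (xor w.2.1 w.2.2)))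
        - Hent (fun uy : 𝒰 × Bool => ∑ x, p (uy.1, x) * bern (bconv β₂ βS) (xor x uy.2)))
    ≤ 1 - Hb β₁ - lam * Hb βS
      + sSup {r : ℝ | ∃ α ∈ Set.Icc (0:ℝ) (1/2),
          r = Hb (bconv α β₁) - (1 - lam) * Hb (bconv (bconv α β₂) βS)
              - lam * Hb (bconv α β₂)} := by
  obtain ⟨hβ₁0, hβ₁h⟩ := hβ₁
  obtain ⟨hβ₂0, hβ₂h⟩ := hβ₂
  obtain ⟨hβS0, hβSh⟩ := hβS
  set β' : ℝ := bconv β₂ βS with hβ'def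
  have hβ'mem : β' ∈ Set.Icc (0:ℝ) 1 :=
    bconv_mem ⟨le_of_lt hβ₂0, by linarith⟩ ⟨le_of_lt hβS0, by linarith⟩
  set s : 𝒰 → ℝ := fun u => p (u, true) + p (u, false) with hsdef
  set t : 𝒰 → ℝ := fun u => if s u = 0 then 0 else p (u, true) / s u with htdef
  have hs0 : ∀ u, 0 ≤ s u := fun u => add_nonneg (hp0 _) (hp0 _)
  have hbt : ∀ u, p (u, true) = s u * t u := by
    intro u
    by_cases h : s u = 0
    · have h1 : p (u, true) = 0 := by
        have h2 := hp0 (u, false)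
        have h3 := hp0 (u, true)
        have : p (u, true) + p (u, false) = 0 := h
        linarith
      simp [htdef, h, h1]
    · simp only [htdef, h, if_false]; field_simp
  have hbf : ∀ u, p (u, false) = s u * (1 - t u) := by
    intro u
    have h := hbt u
    have h2 : s u = p (u, true) + p (u, false) := rfl
    have h3 : s u * (1 - t u) = s u - s u * t u := by ring
    rw [h3, ← h]; linarith
  have ht01 : ∀ u, 0 ≤ t u ∧ t u ≤ 1 := by
    intro u
    by_cases h : s u = 0
    · simp [htdef, h]
    · have hspos : 0 < s u := lt_of_le_of_ne (hs0 u) (Ne.symm h)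
      constructor
      · simp only [htdef, h, if_false]
        exact div_nonneg (hp0 _) (hs0 u)
      · simp only [htdef, h, if_false]
        rw [div_le_one hspos]
        have := hp0 (u, false)
        simp only [hsdef]; linarith
  have hsum1 : ∑ u, s u = 1 := by
    rw [← hp1, Fintype.sum_prod_type]
    refine Finset.sum_congr rfl fun u _ => ?_
    simp only [hsdef]
    exact (Fintype.sum_bool (fun x => p (u, x))).symm
  -- entropy computations
  have hU : Hent (fun u : 𝒰 => ∑ x, p (u, x)) = ∑ u, phi (s u) := by
    rw [Hent_eq]
    refine Finset.sum_congr rfl fun u _ => congrArg phi ?_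
    simp only [hsdef]
    exact Fintype.sum_bool (fun x => p (u, x))
  have hUY1 : Hent (fun uy : 𝒰 × Bool => ∑ x, p (uy.1, x) * bern β₁ (xor x uy.2))
      = (∑ u, s u * Hb (bconv (t u) β₁)) + ∑ u, phi (s u) := by
    rw [Hent_eq, Fintype.sum_prod_type, ← Finset.sum_add_distrib]
    refine Finset.sum_congr rfl fun u _ => ?_
    rw [Fintype.sum_bool]
    simp only [Fintype.sum_bool, bern, Bool.xor_true, Bool.xor_false, Bool.not_true,
      Bool.not_false, if_true, if_false, Bool.false_eq_true, Bool.true_eq_false]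
    rw [hbt u, hbf u]
    exact two_phi (hs0 u) (ht01 u).1 (ht01 u).2 (le_of_lt hβ₁0) (by linarith)
  have hUXY1 : Hent (fun w : 𝒰 × Bool × Bool => p (w.1, w.2.1) * bern β₁ (xor w.2.1 w.2.2))
      = Hb β₁ + Hent p := by
    have hHp : Hent p = ∑ u, (phi (p (u, true)) + phi (p (u, false))) := by
      rw [Hent_eq, Fintype.sum_prod_type]
      exact Finset.sum_congr rfl fun u _ => Fintype.sum_bool (fun x => phi (p (u, x)))
    rw [Hent_eq, Fintype.sum_prod_type, hHp,
      show Hb β₁ = (∑ u, s u) * Hb β₁ by rw [hsum1, one_mul], Finset.sum_mul,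
      ← Finset.sum_add_distrib]
    refine Finset.sum_congr rfl fun u _ => ?_
    simp only [Fintype.sum_prod_type, Fintype.sum_bool, bern, Bool.xor_true, Bool.xor_false,
      Bool.not_true, Bool.not_false, if_true, if_false, Bool.false_eq_true, Bool.true_eq_false]
    have h1 := phi_pair (s := p (u, true)) (m := β₁) (hp0 _) (le_of_lt hβ₁0) (by linarith)
    have h2 := phi_pair (s := p (u, false)) (m := β₁) (hp0 _) (le_of_lt hβ₁0) (by linarith)
    have hsu : s u = p (u, true) + p (u, false) := rfl
    linear_combination h1 + h2 + Hb β₁ * hsu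
  have hY2 : Hent (fun y : Bool => ∑ u, ∑ x, p (u, x) * bern β' (xor x y))
      = Hb (bconv (∑ u, p (u, true)) β') := by
    have hAB : (∑ u, p (u, true)) + (∑ u, p (u, false)) = 1 := by
      rw [← hsum1, ← Finset.sum_add_distrib]
    have hB0 : 0 ≤ ∑ u, p (u, true) := Finset.sum_nonneg fun u _ => hp0 _
    have hA0 : 0 ≤ ∑ u, p (u, false) := Finset.sum_nonneg fun u _ => hp0 _
    have hB1 : (∑ u, p (u, true)) ≤ 1 := by linarith
    have hA : (∑ u, p (u, false)) = 1 - ∑ u, p (u, true) := by linarith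
    rw [Hent_eq, Fintype.sum_bool]
    simp only [Fintype.sum_bool, bern, Bool.xor_true, Bool.xor_false, Bool.not_true,
      Bool.not_false, if_true, if_false, Bool.false_eq_true, Bool.true_eq_false]
    rw [Finset.sum_add_distrib, Finset.sum_add_distrib, ← Finset.sum_mul, ← Finset.sum_mul,
      ← Finset.sum_mul, ← Finset.sum_mul, hA]
    have h := two_phi (s := 1) (t := ∑ u, p (u, true)) (β := β') zero_le_one hB0 hB1
      hβ'mem.1 hβ'mem.2
    have hphi1 : phi 1 = 0 := by simp [phi]
    simp only [one_mul] at h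
    linear_combination h + hphi1
  have hUY2 : Hent (fun uy : 𝒰 × Bool => ∑ x, p (uy.1, x) * bern β' (xor x uy.2))
      = (∑ u, s u * Hb (bconv (t u) β')) + ∑ u, phi (s u) := by
    rw [Hent_eq, Fintype.sum_prod_type, ← Finset.sum_add_distrib]
    refine Finset.sum_congr rfl fun u _ => ?_
    rw [Fintype.sum_bool]
    simp only [Fintype.sum_bool, bern, Bool.xor_true, Bool.xor_false, Bool.not_true,
      Bool.not_false, if_true, if_false, Bool.false_eq_true, Bool.true_eq_false]
    rw [hbt u, hbf u]
    exact two_phi (hs0 u) (ht01 u).1 (ht01 u).2 hβ'mem.1 hβ'mem.2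
  have hUY2S : Hent (fun w : 𝒰 × Bool × Bool =>
        ∑ x, p (w.1, x) * bern βS w.2.2 * bern β₂ (xor x (xor w.2.1 w.2.2)))
      = (∑ u, s u * Hb (bconv (t u) β₂)) + Hb βS + ∑ u, phi (s u) := by
    rw [Hent_eq, Fintype.sum_prod_type,
      show Hb βS = (∑ u, s u) * Hb βS by rw [hsum1, one_mul], Finset.sum_mul,
      ← Finset.sum_add_distrib, ← Finset.sum_add_distrib]
    refine Finset.sum_congr rfl fun u _ => ?_
    simp only [Fintype.sum_prod_type, Fintype.sum_bool, bern, Bool.xor_true, Bool.xor_false,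
      Bool.not_true, Bool.not_false, if_true, if_false, Bool.false_eq_true, Bool.true_eq_false]
    rw [hbt u, hbf u,
      show s u * t u * βS * β₂ + s u * (1 - t u) * βS * (1 - β₂)
        = s u * βS * t u * β₂ + s u * βS * (1 - t u) * (1 - β₂) from by ring,
      show s u * t u * (1 - βS) * (1 - β₂) + s u * (1 - t u) * (1 - βS) * β₂
        = s u * (1 - βS) * t u * (1 - β₂) + s u * (1 - βS) * (1 - t u) * β₂ from by ring,
      show s u * t u * βS * (1 - β₂) + s u * (1 - t u) * βS * β₂
        = s u * βS * t u * (1 - β₂) + s u * βS * (1 - t u) * β₂ from by ring,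
      show s u * t u * (1 - βS) * β₂ + s u * (1 - t u) * (1 - βS) * (1 - β₂)
        = s u * (1 - βS) * t u * β₂ + s u * (1 - βS) * (1 - t u) * (1 - β₂) from by ring]
    have h := four_phi (s := s u) (t := t u) (β := β₂) (γ := βS) (hs0 u)
      (ht01 u).1 (ht01 u).2 (le_of_lt hβ₂0) (by linarith) (le_of_lt hβS0) (by linarith)
    linear_combination h
  -- the bound
  set M : ℝ := sSup {r : ℝ | ∃ α ∈ Set.Icc (0:ℝ) (1/2),
      r = Hb (bconv α β₁) - (1 - lam) * Hb (bconv (bconv α β₂) βS)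
          - lam * Hb (bconv α β₂)} with hMdef
  have hBdd : BddAbove {r : ℝ | ∃ α ∈ Set.Icc (0:ℝ) (1/2),
      r = Hb (bconv α β₁) - (1 - lam) * Hb (bconv (bconv α β₂) βS)
          - lam * Hb (bconv α β₂)} := by
    refine ⟨1 + |1 - lam|, ?_⟩
    rintro r ⟨α, ⟨hα0, hα1⟩, rfl⟩
    have hα1' : α ≤ 1 := by linarith
    have hm2 := bconv_mem (a := α) (b := β₂) ⟨hα0, hα1'⟩ ⟨le_of_lt hβ₂0, by linarith⟩
    have hmS := bconv_mem hm2 (⟨le_of_lt hβS0, by linarith⟩ : βS ∈ Set.Icc (0:ℝ) 1)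
    have h1 := Hb_le_one (bconv α β₁)
    have h2 := Hb_nonneg hmS.1 hmS.2
    have h3 := Hb_le_one (bconv (bconv α β₂) βS)
    have h4 := Hb_nonneg hm2.1 hm2.2
    have h5 := neg_abs_le (1 - lam)
    have h6 := le_abs_self (1 - lam)
    nlinarith
  have hle : ∀ u, Hb (bconv (t u) β₁) - (1 - lam) * Hb (bconv (bconv (t u) β₂) βS)
      - lam * Hb (bconv (t u) β₂) ≤ M := by
    intro u
    obtain ⟨ht0, ht1⟩ := ht01 u
    rcases le_or_gt (t u) (1/2) with h | h
    · exact le_csSup hBdd ⟨t u, ⟨ht0, h⟩, rfl⟩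
    · have key : Hb (bconv (t u) β₁) - (1 - lam) * Hb (bconv (bconv (t u) β₂) βS)
          - lam * Hb (bconv (t u) β₂)
          = Hb (bconv (1 - t u) β₁) - (1 - lam) * Hb (bconv (bconv (1 - t u) β₂) βS)
          - lam * Hb (bconv (1 - t u) β₂) := by
        rw [bconv_one_sub_left, bconv_one_sub_left, bconv_one_sub_left,
          Hb_one_sub, Hb_one_sub, Hb_one_sub]
      rw [key]
      exact le_csSup hBdd ⟨1 - t u, ⟨by linarith, by linarith⟩, rfl⟩
  have hsum_le : ∑ u, s u * (Hb (bconv (t u) β₁)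
      - (1 - lam) * Hb (bconv (bconv (t u) β₂) βS) - lam * Hb (bconv (t u) β₂)) ≤ M := by
    calc ∑ u, s u * (Hb (bconv (t u) β₁)
          - (1 - lam) * Hb (bconv (bconv (t u) β₂) βS) - lam * Hb (bconv (t u) β₂))
        ≤ ∑ u, s u * M :=
          Finset.sum_le_sum fun u _ => mul_le_mul_of_nonneg_left (hle u) (hs0 u)
      _ = M := by rw [← Finset.sum_mul, hsum1, one_mul]
  have hY2le : Hb (bconv (∑ u, p (u, true)) β') ≤ 1 := Hb_le_one _
  rw [hU, hUY1, hUXY1, hY2, hUY2, hUY2S]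
  have hexp : ∀ u, s u * (Hb (bconv (t u) β₁)
      - (1 - lam) * Hb (bconv (bconv (t u) β₂) βS) - lam * Hb (bconv (t u) β₂))
      = s u * Hb (bconv (t u) β₁) - (1 - lam) * (s u * Hb (bconv (t u) β'))
        - lam * (s u * Hb (bconv (t u) β₂)) := by
    intro u
    rw [hβ'def, bconv_assoc]
    ring
  rw [show (∑ u, s u * (Hb (bconv (t u) β₁)
      - (1 - lam) * Hb (bconv (bconv (t u) β₂) βS) - lam * Hb (bconv (t u) β₂)))
      = (∑ u, s u * Hb (bconv (t u) β₁)) - (1 - lam) * (∑ u, s u * Hb (bconv (t u) β'))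
        - lam * (∑ u, s u * Hb (bconv (t u) β₂)) from by
    rw [Finset.mul_sum, Finset.mul_sum, ← Finset.sum_sub_distrib, ← Finset.sum_sub_distrib]
    exact Finset.sum_congr rfl fun u _ => hexp u] at hsum_le
  linarith
end

section
/- Fix λ ≥ 0 and β_1, β_2, β_S ∈ (0, 1/2) with β_1 < β_2. Define J(α) := H_b(α*β_1) − (1−λ) H_b(α*β_2*β_S) − λ H_b(α*β_2) for α ∈ [0, 1/2]. Then the second derivative of J with respect to α equals φ(α)·(log e)/ψ(α), where ψ(α) = (1−α*β_1)(α*β_1)(1−α*β_2*β_S)(α*β_2*β_S)(1−α*β_2)(α*β_2) > 0 and φ(α) = μ α² − μ α + ν is a quadratic with μ = λ(β_2 − β_2*β_S)(1 − β_2 − β_2*β_S)(1−2β_1)² − (β_1 − β_2*β_S)(1 − β_1 − β_2*β_S)(1−2β_2)² and ν = −λ(1−β_1)β_1(β_2 − β_2*β_S)(1 − β_2 − β_2*β_S) + (1−β_2)β_2(β_1 − β_2*β_S)(1 − β_1 − β_2*β_S). -/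
/-- First derivative of the binary entropy. -/
noncomputable def dHb (p : ℝ) : ℝ := (Real.log (1 - p) - Real.log p) / Real.log 2

lemma hasDerivAt_bconv (β a : ℝ) : HasDerivAt (fun a => bconv a β) (1 - 2*β) a := by
  have h : (fun a : ℝ => bconv a β) = fun a => (1 - 2*β) * a + β := by
    funext x; unfold bconv; ring
  rw [h]
  simpa using ((hasDerivAt_id a).const_mul (1 - 2*β)).add_const β

lemma hasDerivAt_Hb {p : ℝ} (h0 : 0 < p) (h1 : p < 1) :
    HasDerivAt Hb (dHb p) p := by
  have h1' : (0:ℝ) < 1 - p := by linarith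
  have hrw : Hb = fun p : ℝ => (-(p * Real.log p) - (1 - p) * Real.log (1 - p)) / Real.log 2 := by
    funext x; unfold Hb; rw [Real.logb, Real.logb]; ring
  rw [hrw]
  have h1d : HasDerivAt (fun p : ℝ => p * Real.log p) (Real.log p + 1) p := by
    simpa [h0.ne'] using (hasDerivAt_id p).fun_mul (Real.hasDerivAt_log h0.ne')
  have h2i : HasDerivAt (fun p : ℝ => 1 - p) (-1) p := by
    simpa using (hasDerivAt_const p (1:ℝ)).fun_sub (hasDerivAt_id p)
  have h2l : HasDerivAt (fun p : ℝ => Real.log (1 - p)) ((1 - p)⁻¹ * (-1)) p :=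
    (Real.hasDerivAt_log h1'.ne').comp p h2i
  have h2d : HasDerivAt (fun p : ℝ => (1 - p) * Real.log (1 - p))
      ((-1) * Real.log (1 - p) + (1 - p) * ((1 - p)⁻¹ * (-1))) p := h2i.mul h2l
  have := ((h1d.fun_neg.fun_sub h2d).div_const (Real.log 2))
  refine this.congr_deriv ?_
  unfold dHb
  field_simp
  ring

lemma hasDerivAt_dHb {p : ℝ} (h0 : 0 < p) (h1 : p < 1) :
    HasDerivAt dHb ((-(1 - p)⁻¹ - p⁻¹) / Real.log 2) p := by
  have h1' : (0:ℝ) < 1 - p := by linarith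
  have h2i : HasDerivAt (fun p : ℝ => 1 - p) (-1) p := by
    simpa using (hasDerivAt_const p (1:ℝ)).fun_sub (hasDerivAt_id p)
  have h2l : HasDerivAt (fun p : ℝ => Real.log (1 - p)) ((1 - p)⁻¹ * (-1)) p :=
    (Real.hasDerivAt_log h1'.ne').comp p h2i
  have h1l : HasDerivAt (fun p : ℝ => Real.log p) p⁻¹ p := Real.hasDerivAt_log h0.ne'
  have := (h2l.fun_sub h1l).div_const (Real.log 2)
  refine this.congr_deriv ?_
  ring

lemma bconv_mem_s5 {β a : ℝ} (hβ0 : 0 < β) (hβ : β < 1/2) (ha : -β < a) (ha1 : a < 1) :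
    0 < bconv a β ∧ bconv a β < 1 := by
  unfold bconv
  constructor
  · nlinarith
  · nlinarith


lemma frac_lemma (x₁ xS x₂ c₁ cS c₂ lam L φ : ℝ)
    (h1 : x₁ ≠ 0) (h1' : 1 - x₁ ≠ 0) (h2 : x₂ ≠ 0) (h2' : 1 - x₂ ≠ 0)
    (h3 : xS ≠ 0) (h3' : 1 - xS ≠ 0) (hL : L ≠ 0)
    (hφ : -(c₁^2 * ((1 - xS) * xS * ((1 - x₂) * x₂)))
          + (1 - lam) * (cS^2 * ((1 - x₁) * x₁ * ((1 - x₂) * x₂)))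
          + lam * (c₂^2 * ((1 - x₁) * x₁ * ((1 - xS) * xS))) = φ) :
    (-(1 - x₁)⁻¹ - x₁⁻¹) / L * c₁ * c₁
      - (1 - lam) * ((-(1 - xS)⁻¹ - xS⁻¹) / L * cS * cS)
      - lam * ((-(1 - x₂)⁻¹ - x₂⁻¹) / L * c₂ * c₂)
    = φ * (1 / L) / ((1 - x₁) * x₁ * (1 - xS) * xS * (1 - x₂) * x₂) := by
  rw [← hφ]
  field_simp
  ring

set_option maxHeartbeats 2000000 in
/-- second-derivative formula for
`J(α) = H_b(α*β₁) − (1−λ)H_b(α*β₂*β_S) − λH_b(α*β₂)`: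
`J''(α) = φ(α) log e / ψ(α)` with `ψ(α) > 0` on `[0,1/2]` and
`φ(α) = μα² − μα + ν` the indicated quadratic. -/
theorem second_derivative_of_J
    (lam β₁ β₂ βS : ℝ) (hlam : 0 ≤ lam)
    (hβ₁ : β₁ ∈ Set.Ioo (0:ℝ) (1/2)) (hβ₂ : β₂ ∈ Set.Ioo (0:ℝ) (1/2))
    (hβS : βS ∈ Set.Ioo (0:ℝ) (1/2)) (h12 : β₁ < β₂) :
    ∀ α ∈ Set.Icc (0:ℝ) (1/2),
      0 < (1 - bconv α β₁) * (bconv α β₁) * (1 - bconv (bconv α β₂) βS) *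
          (bconv (bconv α β₂) βS) * (1 - bconv α β₂) * (bconv α β₂) ∧
      deriv (deriv (fun a => Hb (bconv a β₁) - (1 - lam) * Hb (bconv (bconv a β₂) βS)
          - lam * Hb (bconv a β₂))) α
        = ((lam * (β₂ - bconv β₂ βS) * (1 - β₂ - bconv β₂ βS) * (1 - 2*β₁)^2
              - (β₁ - bconv β₂ βS) * (1 - β₁ - bconv β₂ βS) * (1 - 2*β₂)^2) * α^2
            - (lam * (β₂ - bconv β₂ βS) * (1 - β₂ - bconv β₂ βS) * (1 - 2*β₁)^2
              - (β₁ - bconv β₂ βS) * (1 - β₁ - bconv β₂ βS) * (1 - 2*β₂)^2) * α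
            + (-(lam * (1 - β₁) * β₁ * (β₂ - bconv β₂ βS) * (1 - β₂ - bconv β₂ βS))
              + (1 - β₂) * β₂ * (β₁ - bconv β₂ βS) * (1 - β₁ - bconv β₂ βS)))
          * Real.logb 2 (Real.exp 1)
          / ((1 - bconv α β₁) * (bconv α β₁) * (1 - bconv (bconv α β₂) βS) *
             (bconv (bconv α β₂) βS) * (1 - bconv α β₂) * (bconv α β₂)) := by
  obtain ⟨hβ₁0, hβ₁h⟩ := hβ₁
  obtain ⟨hβ₂0, hβ₂h⟩ := hβ₂
  obtain ⟨hβS0, hβSh⟩ := hβS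
  -- membership facts for all points of U := Ioo (-β₁) 1
  have key : ∀ a ∈ Set.Ioo (-β₁) (1:ℝ),
      (0 < bconv a β₁ ∧ bconv a β₁ < 1) ∧ (0 < bconv a β₂ ∧ bconv a β₂ < 1) ∧
      (0 < bconv (bconv a β₂) βS ∧ bconv (bconv a β₂) βS < 1) := by
    intro a ⟨ha0, ha1⟩
    have h1 := bconv_mem_s5 hβ₁0 hβ₁h ha0 ha1
    have h2 := bconv_mem_s5 hβ₂0 hβ₂h (by linarith) ha1
    have h3 := bconv_mem_s5 hβS0 hβSh (by linarith [h2.1]) h2.2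
    exact ⟨h1, h2, h3⟩
  have hJ' : ∀ a ∈ Set.Ioo (-β₁) (1:ℝ),
      HasDerivAt (fun a => Hb (bconv a β₁) - (1 - lam) * Hb (bconv (bconv a β₂) βS)
          - lam * Hb (bconv a β₂))
        (dHb (bconv a β₁) * (1 - 2*β₁)
          - (1 - lam) * (dHb (bconv (bconv a β₂) βS) * ((1 - 2*βS) * (1 - 2*β₂)))
          - lam * (dHb (bconv a β₂) * (1 - 2*β₂))) a := by
    intro a ha
    obtain ⟨h1, h2, h3⟩ := key a ha
    have d1 : HasDerivAt (fun a => Hb (bconv a β₁)) (dHb (bconv a β₁) * (1 - 2*β₁)) a :=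
      HasDerivAt.comp (h₂ := Hb) a (hasDerivAt_Hb h1.1 h1.2) (hasDerivAt_bconv β₁ a)
    have dinner : HasDerivAt (fun a => bconv (bconv a β₂) βS) ((1 - 2*βS) * (1 - 2*β₂)) a :=
      HasDerivAt.comp (h₂ := fun a => bconv a βS) a (hasDerivAt_bconv βS (bconv a β₂)) (hasDerivAt_bconv β₂ a)
    have d2 : HasDerivAt (fun a => Hb (bconv (bconv a β₂) βS))
        (dHb (bconv (bconv a β₂) βS) * ((1 - 2*βS) * (1 - 2*β₂))) a :=
      HasDerivAt.comp (h₂ := Hb) a (hasDerivAt_Hb h3.1 h3.2) dinner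
    have d3 : HasDerivAt (fun a => Hb (bconv a β₂)) (dHb (bconv a β₂) * (1 - 2*β₂)) a :=
      HasDerivAt.comp (h₂ := Hb) a (hasDerivAt_Hb h2.1 h2.2) (hasDerivAt_bconv β₂ a)
    exact (d1.sub (d2.const_mul (1 - lam))).sub (d3.const_mul lam)
  intro α hα
  obtain ⟨hα0, hα1⟩ := hα
  have hαU : α ∈ Set.Ioo (-β₁) (1:ℝ) := ⟨by linarith, by linarith⟩
  obtain ⟨h1, h2, h3⟩ := key α hαU
  have hlog2 : Real.log 2 ≠ 0 := by
    have := Real.log_pos (by norm_num : (1:ℝ) < 2); linarith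
  constructor
  · have := h1.1; have := h1.2; have := h2.1; have := h2.2; have := h3.1; have := h3.2
    nlinarith [mul_pos (mul_pos (mul_pos (mul_pos (mul_pos
        (show (0:ℝ) < 1 - bconv α β₁ by linarith) h1.1)
        (show (0:ℝ) < 1 - bconv (bconv α β₂) βS by linarith)) h3.1)
        (show (0:ℝ) < 1 - bconv α β₂ by linarith)) h2.1]
  · have hU : Set.Ioo (-β₁) (1:ℝ) ∈ nhds α := isOpen_Ioo.mem_nhds hαU
    have hEq : deriv (fun a => Hb (bconv a β₁) - (1 - lam) * Hb (bconv (bconv a β₂) βS)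
          - lam * Hb (bconv a β₂))
        =ᶠ[nhds α] (fun a => dHb (bconv a β₁) * (1 - 2*β₁)
          - (1 - lam) * (dHb (bconv (bconv a β₂) βS) * ((1 - 2*βS) * (1 - 2*β₂)))
          - lam * (dHb (bconv a β₂) * (1 - 2*β₂))) :=
      Filter.eventuallyEq_of_mem hU (fun a ha => (hJ' a ha).deriv)
    rw [hEq.deriv_eq]
    -- now compute the derivative of the explicit first-derivative formula
    have dinner : HasDerivAt (fun a => bconv (bconv a β₂) βS) ((1 - 2*βS) * (1 - 2*β₂)) α :=
      HasDerivAt.comp (h₂ := fun a => bconv a βS) α (hasDerivAt_bconv βS (bconv α β₂)) (hasDerivAt_bconv β₂ α)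
    have e1 : HasDerivAt (fun a => dHb (bconv a β₁) * (1 - 2*β₁))
        ((-(1 - bconv α β₁)⁻¹ - (bconv α β₁)⁻¹) / Real.log 2 * (1 - 2*β₁) * (1 - 2*β₁)) α :=
      (((hasDerivAt_dHb h1.1 h1.2).comp α (hasDerivAt_bconv β₁ α)).mul_const (1 - 2*β₁))
    have e2 : HasDerivAt (fun a => (1 - lam) * (dHb (bconv (bconv a β₂) βS) * ((1 - 2*βS) * (1 - 2*β₂))))
        ((1 - lam) * ((-(1 - bconv (bconv α β₂) βS)⁻¹ - (bconv (bconv α β₂) βS)⁻¹) / Real.log 2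
            * ((1 - 2*βS) * (1 - 2*β₂)) * ((1 - 2*βS) * (1 - 2*β₂)))) α :=
      ((((hasDerivAt_dHb h3.1 h3.2).comp α dinner).mul_const ((1 - 2*βS) * (1 - 2*β₂))).const_mul (1 - lam))
    have e3 : HasDerivAt (fun a => lam * (dHb (bconv a β₂) * (1 - 2*β₂)))
        (lam * ((-(1 - bconv α β₂)⁻¹ - (bconv α β₂)⁻¹) / Real.log 2 * (1 - 2*β₂) * (1 - 2*β₂))) α :=
      ((((hasDerivAt_dHb h2.1 h2.2).comp α (hasDerivAt_bconv β₂ α)).mul_const (1 - 2*β₂)).const_mul lam)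
    rw [((e1.fun_sub e2).fun_sub e3).deriv]
    rw [show Real.logb 2 (Real.exp 1) = 1 / Real.log 2 by
      rw [Real.logb, Real.log_exp]]
    have n1 : bconv α β₁ ≠ 0 := ne_of_gt h1.1
    have n1' : (1 : ℝ) - bconv α β₁ ≠ 0 := by linarith [h1.2]
    have n2 : bconv α β₂ ≠ 0 := ne_of_gt h2.1
    have n2' : (1 : ℝ) - bconv α β₂ ≠ 0 := by linarith [h2.2]
    have n3 : bconv (bconv α β₂) βS ≠ 0 := ne_of_gt h3.1
    have n3' : (1 : ℝ) - bconv (bconv α β₂) βS ≠ 0 := by linarith [h3.2]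
    refine frac_lemma _ _ _ _ _ _ lam _ _ n1 n1' n2 n2' n3 n3' hlog2 ?_
    simp only [bconv]
    ring
end

section
/- Fix λ ≥ 0 and β_1, β_2, β_S ∈ (0,1/2) with β_1 < β_2 < β_2 * β_S. With μ and ν as defined from λ, β_1, β_2, β_S (μ = λ(β_2 − β_2*β_S)(1 − β_2 − β_2*β_S)(1−2β_1)² − (β_1 − β_2*β_S)(1 − β_1 − β_2*β_S)(1−2β_2)², ν = −λ(1−β_1)β_1(β_2 − β_2*β_S)(1 − β_2 − β_2*β_S) + (1−β_2)β_2(β_1 − β_2*β_S)(1 − β_1 − β_2*β_S)): if μ > 0 then ν < 0. -/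
/-- With `β₁ < β₂ < β₂*β_S` (all in `(0,1/2)`), and `μ, ν` as defined from
`λ, β₁, β₂, β_S`, if `μ > 0` then `ν < 0`. -/
theorem mu_pos_implies_nu_neg
    (lam β₁ β₂ βS : ℝ) (hlam : 0 ≤ lam)
    (hβ₁ : β₁ ∈ Set.Ioo (0:ℝ) (1/2)) (hβ₂ : β₂ ∈ Set.Ioo (0:ℝ) (1/2))
    (hβS : βS ∈ Set.Ioo (0:ℝ) (1/2))
    (h12 : β₁ < β₂) (h2S : β₂ < bconv β₂ βS) :
    0 < lam * (β₂ - bconv β₂ βS) * (1 - β₂ - bconv β₂ βS) * (1 - 2*β₁)^2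
        - (β₁ - bconv β₂ βS) * (1 - β₁ - bconv β₂ βS) * (1 - 2*β₂)^2 →
    -(lam * (1 - β₁) * β₁ * (β₂ - bconv β₂ βS) * (1 - β₂ - bconv β₂ βS))
        + (1 - β₂) * β₂ * (β₁ - bconv β₂ βS) * (1 - β₁ - bconv β₂ βS) < 0 := by
  intro hμ
  obtain ⟨h1, h2⟩ := hβ₁
  obtain ⟨h3, h4⟩ := hβ₂
  obtain ⟨h5, h6⟩ := hβS
  set c := bconv β₂ βS with hc
  have hc2 : c < 1/2 := by
    simp only [hc, bconv]; nlinarith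
  have key : (-(lam * (1 - β₁) * β₁ * (β₂ - c) * (1 - β₂ - c))
      + (1 - β₂) * β₂ * (β₁ - c) * (1 - β₁ - c)) * (1 - 2*β₁)^2
      = -(β₁ * (1 - β₁)) * (lam * (β₂ - c) * (1 - β₂ - c) * (1 - 2*β₁)^2
          - (β₁ - c) * (1 - β₁ - c) * (1 - 2*β₂)^2)
        + (β₁ - c) * (1 - β₁ - c) * (β₂ - β₁) * (1 - β₁ - β₂) := by ring
  have hB : (β₁ - c) * (1 - β₁ - c) < 0 := by nlinarith
  have hsq : (0:ℝ) < (1 - 2*β₁)^2 := pow_pos (by linarith) 2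
  nlinarith [mul_pos (mul_pos h1 (by linarith : (0:ℝ) < 1 - β₁)) hμ,
    mul_neg_of_neg_of_pos hB (by nlinarith : (0:ℝ) < (β₂ - β₁) * (1 - β₁ - β₂))]
end

section
/- Fix N_1, N_2, N_S > 0 with N_1 ≤ N_2. Define R_G(D,P) := (1/2) log( (P+N_2+N_S)/(2πe N_1 N_S²) · ( 2πe(N_1−N_2)N_S + (N_2+N_S−N_1) 2^{2D} ) ) on the domain D ∈ [ (1/2)log(2πe N_2 N_S/(N_2+N_S)), (1/2)log(2πe (P+N_2)N_S/(P+N_2+N_S)) ]. Then for fixed P > 0, R_G(·, P) is concave in D on this domain; specifically its second partial derivative in D equals (4πe ln 2)(N_1−N_2)(N_2+N_S−N_1) N_S 2^{2D} / ( 2πe(N_1−N_2)N_S + (N_2+N_S−N_1) 2^{2D} )², which is ≤ 0 when N_1 ≤ N_2. -/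
open Real

/-- the function
`R_G(D,P) = (1/2)log₂( (P+N₂+N_S)/(2πe N₁ N_S²) ( 2πe(N₁−N₂)N_S + (N₂+N_S−N₁)2^{2D} ) )`
is concave in `D` on the stated domain when `N₁ ≤ N₂`, with second partial derivative in `D`
equal to `(4πe ln 2)(N₁−N₂)(N₂+N_S−N₁)N_S 2^{2D} / (2πe(N₁−N₂)N_S + (N₂+N_S−N₁)2^{2D})²`,
which is `≤ 0`. -/
theorem RG_concave_in_D
    (N₁ N₂ NS P : ℝ) (h1 : 0 < N₁) (h2 : 0 < N₂) (hS : 0 < NS) (hP : 0 < P)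
    (h12 : N₁ ≤ N₂) :
    (∀ D ∈ Set.Icc ((1/2) * logb 2 (2*π*exp 1*N₂*NS/(N₂+NS)))
        ((1/2) * logb 2 (2*π*exp 1*(P+N₂)*NS/(P+N₂+NS))),
      deriv (deriv (fun d => (1/2) * logb 2 ((P+N₂+NS)/(2*π*exp 1*N₁*NS^2) *
          (2*π*exp 1*(N₁-N₂)*NS + (N₂+NS-N₁) * (2:ℝ)^(2*d))))) D
        = (4*π*exp 1*Real.log 2) * (N₁-N₂) * (N₂+NS-N₁) * NS * (2:ℝ)^(2*D)
          / (2*π*exp 1*(N₁-N₂)*NS + (N₂+NS-N₁) * (2:ℝ)^(2*D))^2 ∧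
      (4*π*exp 1*Real.log 2) * (N₁-N₂) * (N₂+NS-N₁) * NS * (2:ℝ)^(2*D)
          / (2*π*exp 1*(N₁-N₂)*NS + (N₂+NS-N₁) * (2:ℝ)^(2*D))^2 ≤ 0) ∧
    ConcaveOn ℝ
      (Set.Icc ((1/2) * logb 2 (2*π*exp 1*N₂*NS/(N₂+NS)))
        ((1/2) * logb 2 (2*π*exp 1*(P+N₂)*NS/(P+N₂+NS))))
      (fun d => (1/2) * logb 2 ((P+N₂+NS)/(2*π*exp 1*N₁*NS^2) *
          (2*π*exp 1*(N₁-N₂)*NS + (N₂+NS-N₁) * (2:ℝ)^(2*d)))) := by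
  have hπ : (0:ℝ) < π := Real.pi_pos
  have he : (0:ℝ) < exp 1 := Real.exp_pos 1
  set A : ℝ := 2*π*exp 1*(N₁-N₂)*NS with hA
  set B : ℝ := N₂+NS-N₁ with hB
  set C : ℝ := (P+N₂+NS)/(2*π*exp 1*N₁*NS^2) with hC
  set L : ℝ := (1/2) * logb 2 (2*π*exp 1*N₂*NS/(N₂+NS)) with hL
  set U : ℝ := (1/2) * logb 2 (2*π*exp 1*(P+N₂)*NS/(P+N₂+NS)) with hU
  have hBpos : 0 < B := by simp only [hB]; nlinarith
  have hCpos : 0 < C := by positivity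
  have hM : (0:ℝ) < 2*π*exp 1*N₂*NS/(N₂+NS) := by positivity
  have h2L : (2:ℝ)^(2*L) = 2*π*exp 1*N₂*NS/(N₂+NS) := by
    rw [hL]
    rw [show 2*((1:ℝ)/2 * logb 2 (2*π*exp 1*N₂*NS/(N₂+NS))) =
        logb 2 (2*π*exp 1*N₂*NS/(N₂+NS)) by ring]
    exact Real.rpow_logb two_pos (by norm_num) hM
  -- positivity of the inner expression on [L, ∞)
  have hgpos : ∀ d : ℝ, L ≤ d → 0 < A + B * (2:ℝ)^(2*d) := by
    intro d hd
    have h2d : (2:ℝ)^(2*L) ≤ (2:ℝ)^(2*d) :=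
      Real.rpow_le_rpow_of_exponent_le one_le_two (by linarith)
    rw [h2L] at h2d
    have key : 0 < A + B * (2*π*exp 1*N₂*NS/(N₂+NS)) := by
      have : A + B * (2*π*exp 1*N₂*NS/(N₂+NS)) = 2*π*exp 1*N₁*NS*NS/(N₂+NS) := by
        rw [hA, hB]; field_simp; ring
      rw [this]; positivity
    nlinarith [mul_le_mul_of_nonneg_left h2d hBpos.le]
  set g : ℝ → ℝ := fun d => A + B * (2:ℝ)^(2*d) with hg
  set f : ℝ → ℝ := fun d => (1/2) * logb 2 (C * g d) with hf
  -- derivative of g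
  have hgder : ∀ d : ℝ, HasDerivAt g (2 * Real.log 2 * (B * (2:ℝ)^(2*d))) d := by
    intro d
    have h1' : HasDerivAt (fun x : ℝ => (2:ℝ)^x) ((2:ℝ)^(2*d) * Real.log 2) (2*d) :=
      (Real.hasStrictDerivAt_const_rpow two_pos (2*d)).hasDerivAt
    have h2' : HasDerivAt (fun x : ℝ => 2*x) 2 d := by
      simpa using (hasDerivAt_id d).const_mul 2
    have h3' := h1'.comp d h2'
    have h4' : HasDerivAt (fun x : ℝ => (2:ℝ)^(2*x)) ((2:ℝ)^(2*d) * Real.log 2 * 2) d := h3'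
    have := (h4'.const_mul B).const_add A
    refine this.congr_deriv ?_
    ring
  -- derivative of f where g ≠ 0
  have hfder : ∀ d : ℝ, g d ≠ 0 →
      HasDerivAt f (B * (2:ℝ)^(2*d) / g d) d := by
    intro d hgd
    have hCg : C * g d ≠ 0 := mul_ne_zero hCpos.ne' hgd
    have hlog : HasDerivAt Real.log (C * g d)⁻¹ (C * g d) := Real.hasDerivAt_log hCg
    have hCgder : HasDerivAt (fun x => C * g x) (C * (2 * Real.log 2 * (B * (2:ℝ)^(2*d)))) d :=
      (hgder d).const_mul C
    have hcomp := (hlog.comp d hCgder).const_mul ((1:ℝ)/2)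
    have heq : ∀ x, (1/2) * Real.log (C * g x) = (Real.log 2) * f x := by
      intro x
      simp only [hf, Real.logb]
      field_simp
    have hf2 : HasDerivAt (fun x => (Real.log 2) * f x)
        ((1:ℝ)/2 * ((C * g d)⁻¹ * (C * (2 * Real.log 2 * (B * (2:ℝ)^(2*d)))))) d := by
      refine HasDerivAt.congr_of_eventuallyEq hcomp ?_
      filter_upwards with x using (heq x).symm
    have hlog2 : Real.log 2 ≠ 0 := by
      have := Real.log_pos (by norm_num : (1:ℝ) < 2); linarith
    have hf3 := hf2.const_mul (Real.log 2)⁻¹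
    have hf4 : HasDerivAt f
        ((Real.log 2)⁻¹ * ((1:ℝ)/2 * ((C * g d)⁻¹ * (C * (2 * Real.log 2 * (B * (2:ℝ)^(2*d))))))) d := by
      refine HasDerivAt.congr_of_eventuallyEq hf3 ?_
      filter_upwards with x
      field_simp
    convert hf4 using 1
    field_simp
  -- second derivative where g ≠ 0
  set φ : ℝ → ℝ := fun d => B * (2:ℝ)^(2*d) / g d with hφ
  have hφder : ∀ d : ℝ, g d ≠ 0 →
      HasDerivAt φ ((4*π*exp 1*Real.log 2) * (N₁-N₂) * B * NS * (2:ℝ)^(2*d) / (g d)^2) d := by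
    intro d hgd
    have hnum : HasDerivAt (fun x => B * (2:ℝ)^(2*x)) (B * ((2:ℝ)^(2*d) * Real.log 2 * 2)) d := by
      have h1' : HasDerivAt (fun x : ℝ => (2:ℝ)^x) ((2:ℝ)^(2*d) * Real.log 2) (2*d) :=
        (Real.hasStrictDerivAt_const_rpow two_pos (2*d)).hasDerivAt
      have h2' : HasDerivAt (fun x : ℝ => 2*x) 2 d := by
        simpa using (hasDerivAt_id d).const_mul 2
      exact ((h1'.comp d h2')).const_mul B
    have := hnum.div (hgder d) hgd
    refine this.congr_deriv ?_
    rw [hg, hA]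
    field_simp
    ring
  -- open set where g ≠ 0
  have hgopen : IsOpen {d : ℝ | g d ≠ 0} := by
    have hgc : Continuous g :=
      continuous_iff_continuousAt.mpr fun x => (hgder x).continuousAt
    exact isOpen_ne.preimage hgc
  have hderiv_eq : ∀ d : ℝ, g d ≠ 0 → deriv f d = φ d := fun d hd => (hfder d hd).deriv
  have hderiv2_eq : ∀ D : ℝ, g D ≠ 0 →
      deriv (deriv f) D = (4*π*exp 1*Real.log 2) * (N₁-N₂) * B * NS * (2:ℝ)^(2*D) / (g D)^2 := by
    intro D hgD
    have hev : deriv f =ᶠ[nhds D] φ := by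
      filter_upwards [hgopen.mem_nhds hgD] with x hx using hderiv_eq x hx
    rw [Filter.EventuallyEq.deriv_eq hev]
    exact (hφder D hgD).deriv
  constructor
  · intro D hD
    have hgD : 0 < g D := hgpos D hD.1
    refine ⟨hderiv2_eq D hgD.ne', ?_⟩
    apply div_nonpos_of_nonpos_of_nonneg
    · have hlog2 : 0 < Real.log 2 := Real.log_pos (by norm_num)
      have h2D : (0:ℝ) < (2:ℝ)^(2*D) := Real.rpow_pos_of_pos two_pos _
      have : N₁ - N₂ ≤ 0 := by linarith
      nlinarith [mul_pos (mul_pos (mul_pos (mul_pos (mul_pos (by positivity : (0:ℝ) < 4*π) he) hlog2) hBpos) hS) h2D]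
    · positivity
  · apply concaveOn_of_deriv2_nonpos (convex_Icc _ _)
    · intro x hx
      exact ((hfder x (hgpos x hx.1).ne').continuousAt).continuousWithinAt
    · intro x hx
      rw [interior_Icc] at hx
      exact ((hfder x (hgpos x hx.1.le).ne').differentiableAt).differentiableWithinAt
    · intro x hx
      rw [interior_Icc] at hx
      have hgx : g x ≠ 0 := (hgpos x hx.1.le).ne'
      have hev : deriv f =ᶠ[nhds x] φ := by
        filter_upwards [hgopen.mem_nhds hgx] with y hy using hderiv_eq y hy
      exact (((hφder x hgx).congr_of_eventuallyEq hev).differentiableAt).differentiableWithinAt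
    · intro x hx
      rw [interior_Icc] at hx
      have hgx : 0 < g x := hgpos x hx.1.le
      have h2 : deriv^[2] f x = (4*π*exp 1*Real.log 2) * (N₁-N₂) * B * NS * (2:ℝ)^(2*x) / (g x)^2 := by
        simp only [Function.iterate_succ, Function.iterate_zero, Function.comp_apply, id]
        exact hderiv2_eq x hgx.ne'
      rw [h2]
      apply div_nonpos_of_nonpos_of_nonneg
      · have hlog2 : 0 < Real.log 2 := Real.log_pos (by norm_num)
        have h2x : (0:ℝ) < (2:ℝ)^(2*x) := Real.rpow_pos_of_pos two_pos _
        have : N₁ - N₂ ≤ 0 := by linarith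
        nlinarith [mul_pos (mul_pos (mul_pos (mul_pos (mul_pos (by positivity : (0:ℝ) < 4*π) he) hlog2) hBpos) hS) h2x]
      · positivity
end
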